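/- Let A be an n×n Hermitian matrix and c ∈ ℝ. The quadratic inequality x^H A x + 2 Re(x^H b) + c ≥ 0 holds for all x with ‖x‖ ≤ ε (ε > 0) if there exists δ ≥ 0 such that the block matrix [[A + δI, b],[b^H, c - δε^2]] is positive semidefinite. -/

import Mathlib

open scoped ComplexOrder

/-!
Evaluate the quadratic form of the positive semidefinite certificate at the vector `(x, 1)`:
it equals `xᴴ A x + 2 Re(xᴴ b) + c + δ (‖x‖² - ε²)`, and the last term is `≤ 0` on the ball
since `δ ≥ 0`.
-/

namespace Matrix

theorem star_sumElim_dotProduct_fromBlocks_mulVec {l m α : Type*} [Fintype l] [Fintype m]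
    [NonUnitalNonAssocSemiring α] [StarRing α]
    (A : Matrix l l α) (B : Matrix l m α) (C : Matrix m l α) (D : Matrix m m α)
    (x : l → α) (y : m → α) :
    star (Sum.elim x y) ⬝ᵥ (fromBlocks A B C D *ᵥ Sum.elim x y) =
      star x ⬝ᵥ (A *ᵥ x) + star x ⬝ᵥ (B *ᵥ y) + (star y ⬝ᵥ (C *ᵥ x) + star y ⬝ᵥ (D *ᵥ y)) := by
  rw [fromBlocks_mulVec, Function.star_sumElim, sumElim_dotProduct_sumElim, dotProduct_add,
    dotProduct_add, Sum.elim_comp_inl, Sum.elim_comp_inr]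

variable {ι : Type*} [Fintype ι]

theorem re_star_dotProduct_self (x : ι → ℂ) :
    (star x ⬝ᵥ x).re = ∑ i, Complex.normSq (x i) := by
  simp [dotProduct, Complex.normSq_apply, mul_comm]

theorem re_star_dotProduct_add_smul_one_mulVec [DecidableEq ι]
    (P : Matrix ι ι ℂ) (δ : ℝ) (x : ι → ℂ) :
    (star x ⬝ᵥ ((P + (δ : ℂ) • 1) *ᵥ x)).re =
      (star x ⬝ᵥ (P *ᵥ x)).re + δ * ∑ i, Complex.normSq (x i) := by
  rw [add_mulVec, smul_mulVec, one_mulVec, dotProduct_add, dotProduct_smul, Complex.add_re,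
    smul_eq_mul, Complex.re_ofReal_mul, re_star_dotProduct_self]

theorem re_star_sumElim_one_dotProduct_fromBlocks_replicate_mulVec
    (P : Matrix ι ι ℂ) (b x : ι → ℂ) (d : ℝ) :
    (star (Sum.elim x fun _ : Unit => 1) ⬝ᵥ
        (fromBlocks P (replicateCol Unit b) (replicateRow Unit (star b)) ((d : ℂ) • 1) *ᵥ
          Sum.elim x fun _ => 1)).re =
      (star x ⬝ᵥ (P *ᵥ x)).re + 2 * (star x ⬝ᵥ b).re + d := by
  have hB : replicateCol Unit b *ᵥ (fun _ => 1) = b := by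
    ext; simp [mulVec, dotProduct]
  have hC : replicateRow Unit (star b) *ᵥ x = fun _ => star b ⬝ᵥ x := rfl
  have hD : ((d : ℂ) • (1 : Matrix Unit Unit ℂ)) *ᵥ (fun _ => 1) = fun _ => (d : ℂ) := by
    ext; simp [smul_mulVec]
  rw [star_sumElim_dotProduct_fromBlocks_mulVec, hB, hC, hD, star_dotProduct b x]
  simp only [RCLike.star_def, dotProduct_pUnit, Pi.star_apply, star_one, one_mul, Complex.add_re,
    Complex.conj_re, Complex.ofReal_re]
  ring

end Matrix

open Matrix in
theorem s_procedure_sufficiency_general (n : ℕ)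
    (A : Matrix (Fin n) (Fin n) ℂ)
    (b : Fin n → ℂ) (c ε : ℝ)
    (hcert : ∃ δ : ℝ, 0 ≤ δ ∧
      (Matrix.fromBlocks (A + (δ : ℂ) • 1)
        (Matrix.replicateCol Unit b) (Matrix.replicateRow Unit (star b))
        (((c - δ * ε^2 : ℝ) : ℂ) • 1)).PosSemidef) :
    ∀ x : Fin n → ℂ, ∑ i, Complex.normSq (x i) ≤ ε^2 →
      (star x ⬝ᵥ (A *ᵥ x)).re + 2 * (star x ⬝ᵥ b).re + c ≥ 0 := by
  obtain ⟨δ, hδ, hpsd⟩ := hcert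
  intro x hx
  have hform := (Complex.le_def.mp (hpsd.dotProduct_mulVec_nonneg (Sum.elim x fun _ => 1))).1
  rw [Complex.zero_re, re_star_sumElim_one_dotProduct_fromBlocks_replicate_mulVec,
    re_star_dotProduct_add_smul_one_mulVec] at hform
  linarith [mul_le_mul_of_nonneg_left hx hδ]

open Matrix in
/-- Sufficiency direction of the S-Procedure: an LMI certificate implies the
robust quadratic inequality over the ball ‖x‖ ≤ ε. -/
theorem s_procedure_sufficiency (n : ℕ)
    (A : Matrix (Fin n) (Fin n) ℂ) (hA : A.IsHermitian)
    (b : Fin n → ℂ) (c ε : ℝ) (hε : 0 < ε)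
    (hcert : ∃ δ : ℝ, 0 ≤ δ ∧
      (Matrix.fromBlocks (A + (δ : ℂ) • 1)
        (Matrix.replicateCol Unit b) (Matrix.replicateRow Unit (star b))
        (((c - δ * ε^2 : ℝ) : ℂ) • 1)).PosSemidef) :
    ∀ x : Fin n → ℂ, ∑ i, Complex.normSq (x i) ≤ ε^2 →
      (star x ⬝ᵥ (A *ᵥ x)).re + 2 * (star x ⬝ᵥ b).re + c ≥ 0 :=
  s_procedure_sufficiency_general n A b c ε hcert
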